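/- arXiv:1710.07716 — 2 statements merged into one kernel-verified Lean document; each statement's English description precedes it below -/
import Mathlib

section
/- Let L ≥ 3 be a finite integer and let φ₁, ..., φ_L be nonnegative reals summing to 2π. Define D = Σ_{i=1}^{L-1} Σ_{j=i+1}^{L} sin²(Σ_{k=i}^{j-1} φ_k). Then D ≤ L²/4. -/
/-!
Put `θ_m = φ_1 + ⋯ + φ_{m-1}`; the `(i, j)` term is then `sin² (θ_j - θ_i)`. Since
`sin² x = (1 - cos 2x) / 2` and `cos (2θ_j - 2θ_i)` is the inner product of the unit vectors
`u_m = (cos 2θ_m, sin 2θ_m)`, and since `sin² (θ_j - θ_i)` is symmetric in `i, j` and vanishes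
for `i = j`, the sum over `i < j` is half the sum over all pairs, namely
`D = L² / 4 - ‖u_1 + ⋯ + u_L‖² / 4 ≤ L² / 4`.
-/

open Finset Real

theorem Finset.two_nsmul_sum_sum_filter_lt {ι M : Type*} [LinearOrder ι] [AddCommMonoid M]
    (s : Finset ι) (g : ι → ι → M) (hsymm : ∀ i j, g i j = g j i) (hdiag : ∀ i, g i i = 0) :
    2 • ∑ i ∈ s, ∑ j ∈ s with i < j, g i j = ∑ i ∈ s, ∑ j ∈ s, g i j := by
  have hsplit : ∀ i j, g i j = (if i < j then g i j else 0) + if j < i then g j i else 0 := by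
    intro i j
    rcases lt_trichotomy i j with h | rfl | h
    · simp [h, h.not_gt]
    · simp [hdiag]
    · simp [h, h.not_gt, hsymm i j]
  have hswap : ∑ i ∈ s, ∑ j ∈ s, (if j < i then g j i else 0) =
      ∑ i ∈ s, ∑ j ∈ s, if i < j then g i j else 0 := sum_comm
  simp only [sum_filter, two_nsmul]
  nth_rewrite 2 [← hswap]
  simp only [← sum_add_distrib, ← hsplit]

theorem Real.sum_sum_sin_sq_sub {ι : Type*} (s : Finset ι) (θ : ι → ℝ) :
    ∑ i ∈ s, ∑ j ∈ s, sin (θ j - θ i) ^ 2 =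
      (#s : ℝ) ^ 2 / 2 - ((∑ i ∈ s, cos (2 * θ i)) ^ 2 + (∑ i ∈ s, sin (2 * θ i)) ^ 2) / 2 := by
  have hterm : ∀ i j, sin (θ j - θ i) ^ 2 =
      1 / 2 - (cos (2 * θ i) * cos (2 * θ j) + sin (2 * θ i) * sin (2 * θ j)) / 2 := by
    intro i j
    rw [sin_sq_eq_half_sub, mul_sub, cos_sub]
    ring
  simp only [hterm, sum_sub_distrib, ← sum_div, sum_add_distrib, ← sum_mul_sum, sum_const,
    nsmul_eq_mul]
  ring

theorem Real.sum_sum_filter_lt_sin_sq_sub_le {ι : Type*} [LinearOrder ι] (s : Finset ι)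
    (θ : ι → ℝ) :
    ∑ i ∈ s, ∑ j ∈ s with i < j, sin (θ j - θ i) ^ 2 ≤ (#s : ℝ) ^ 2 / 4 := by
  have hpairs := two_nsmul_sum_sum_filter_lt s (fun i j => sin (θ j - θ i) ^ 2)
    (fun i j => by rw [← neg_sub, sin_neg, neg_sq]) (fun i => by simp)
  rw [sum_sum_sin_sq_sub, two_nsmul] at hpairs
  nlinarith [sq_nonneg (∑ i ∈ s, cos (2 * θ i)), sq_nonneg (∑ i ∈ s, sin (2 * θ i))]

theorem Finset.sum_Icc_sum_Icc_add_one_eq_sum_sum_filter_lt {M : Type*} [AddCommMonoid M]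
    (L : ℕ) (F : ℕ → ℕ → M) :
    ∑ i ∈ Icc 1 (L - 1), ∑ j ∈ Icc (i + 1) L, F i j =
      ∑ i ∈ Icc 1 L, ∑ j ∈ Icc 1 L with i < j, F i j := by
  have hinner : ∀ i ∈ Icc 1 L, {j ∈ Icc 1 L | i < j} = Icc (i + 1) L := by
    intro i hi
    ext j
    simp only [mem_filter, mem_Icc] at hi ⊢
    omega
  calc ∑ i ∈ Icc 1 (L - 1), ∑ j ∈ Icc (i + 1) L, F i j
      = ∑ i ∈ Icc 1 L, ∑ j ∈ Icc (i + 1) L, F i j := by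
        refine sum_subset (Icc_subset_Icc_right (Nat.sub_le L 1)) fun i hi hi' => ?_
        simp only [mem_Icc] at hi hi'
        exact sum_eq_zero fun j hj => by simp only [mem_Icc] at hj; omega
    _ = ∑ i ∈ Icc 1 L, ∑ j ∈ Icc 1 L with i < j, F i j :=
        sum_congr rfl fun i hi => by rw [hinner i hi]

theorem Finset.sum_Icc_sub_one_eq_sub_sum_range {M : Type*} [AddCommGroup M] (φ : ℕ → M)
    {i j : ℕ} (hij : i < j) :
    ∑ k ∈ Icc i (j - 1), φ k = ∑ k ∈ range j, φ k - ∑ k ∈ range i, φ k := by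
  rw [← sum_Ico_eq_sub φ hij.le, Icc_sub_one_right_eq_Ico_of_not_isMin (by simp; omega)]

theorem stmt2_general (L : ℕ) (φ : ℕ → ℝ) :
    ∑ i ∈ Finset.Icc 1 (L - 1), ∑ j ∈ Finset.Icc (i + 1) L,
        (Real.sin (∑ k ∈ Finset.Icc i (j - 1), φ k)) ^ 2 ≤ (L : ℝ) ^ 2 / 4 := by
  calc ∑ i ∈ Icc 1 (L - 1), ∑ j ∈ Icc (i + 1) L, sin (∑ k ∈ Icc i (j - 1), φ k) ^ 2
      = ∑ i ∈ Icc 1 L, ∑ j ∈ Icc 1 L with i < j,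
          sin (∑ k ∈ range j, φ k - ∑ k ∈ range i, φ k) ^ 2 := by
        rw [sum_Icc_sum_Icc_add_one_eq_sum_sum_filter_lt]
        refine sum_congr rfl fun i _ => sum_congr rfl fun j hj => ?_
        rw [sum_Icc_sub_one_eq_sub_sum_range φ (mem_filter.1 hj).2]
    _ ≤ (#(Icc 1 L) : ℝ) ^ 2 / 4 := sum_sum_filter_lt_sin_sq_sub_le _ _
    _ = (L : ℝ) ^ 2 / 4 := by simp

/-- **Lemma 3.** For `L ≥ 3` and nonnegative internodal angles summing to
`2π`, `D = Σ_{i=1}^{L-1} Σ_{j=i+1}^{L} sin²(Σ_{k=i}^{j-1} φ_k) ≤ L²/4`. -/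
theorem stmt2 (L : ℕ) (hL : 3 ≤ L) (φ : ℕ → ℝ)
    (hφ : ∀ k ∈ Finset.Icc 1 L, 0 ≤ φ k)
    (hsum : ∑ k ∈ Finset.Icc 1 L, φ k = 2 * Real.pi) :
    ∑ i ∈ Finset.Icc 1 (L - 1), ∑ j ∈ Finset.Icc (i + 1) L,
        (Real.sin (∑ k ∈ Finset.Icc i (j - 1), φ k)) ^ 2 ≤ (L : ℝ) ^ 2 / 4 :=
  stmt2_general L φ
end

section
/- Let L ≥ 3 and let θ₁, ..., θ_L be equally spaced angles, θ_i = 2πi/L. Then D = Σ_{1 ≤ i < j ≤ L} sin²(θ_j − θ_i) = L²/4. -/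
/-!
Writing `sin² x = 1/2 - cos (2x)/2`, the row sums `∑ⱼ sin²(θⱼ - c)` equal `L/2` for every
`c`, because `∑ⱼ cos (2θⱼ - 2c)` is the real part of `e^{-2ic}` times a full period of the
powers of the root of unity `e^{4πi/L} ≠ 1`, which vanishes. Summing over all `L` rows gives
`L²/2`; the summand is symmetric in `i, j` and vanishes on the diagonal, so the sum over
`i < j` is half of it.
-/

open Real Finset

lemma sum_Icc_pow_eq_zero_of_pow_eq_one {K : Type*} [DivisionRing K] {ζ : K} {n : ℕ}
    (hζn : ζ ^ n = 1) (hζ : ζ ≠ 1) : ∑ j ∈ Icc 1 n, ζ ^ j = 0 := by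
  rw [← Ico_add_one_right_eq_Icc, geom_sum_Ico hζ (by omega), pow_succ, hζn, one_mul, pow_one,
    sub_self, zero_div]

lemma sum_cos_two_pi_mul_div_add_eq_zero {L k : ℕ} (hk : ¬ L ∣ k) (φ : ℝ) :
    ∑ j ∈ Icc 1 L, cos (2 * π * k * j / L + φ) = 0 := by
  obtain rfl | hL := eq_or_ne L 0
  · simp
  set ω := Complex.exp (2 * π * Complex.I / L) with hω_def
  have hω : IsPrimitiveRoot ω L := Complex.isPrimitiveRoot_exp L hL
  set ζ := ω ^ k
  have hζL : ζ ^ L = 1 := by rw [pow_right_comm, hω.pow_eq_one, one_pow]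
  have hζ : ζ ≠ 1 := fun h => hk ((hω.pow_eq_one_iff_dvd k).1 h)
  have hterm : ∀ j : ℕ,
      cos (2 * π * k * j / L + φ) = (Complex.exp (φ * Complex.I) * ζ ^ j).re := by
    intro j
    rw [← pow_mul, hω_def, ← Complex.exp_nat_mul, ← Complex.exp_add,
      ← Complex.exp_ofReal_mul_I_re]
    congr 2
    push_cast
    ring
  rw [sum_congr rfl fun j _ => hterm j, ← Complex.re_sum, ← mul_sum,
    sum_Icc_pow_eq_zero_of_pow_eq_one hζL hζ, mul_zero, Complex.zero_re]

lemma sum_sin_sq_two_pi_mul_div_sub {L : ℕ} (hL : ¬ L ∣ 2) (c : ℝ) :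
    ∑ j ∈ Icc 1 L, sin (2 * π * j / L - c) ^ 2 = L / 2 := by
  have hterm : ∀ j : ℕ, sin (2 * π * j / L - c) ^ 2
      = 1 / 2 - 2⁻¹ * cos (2 * π * (2 : ℕ) * j / L + -(2 * c)) := by
    intro j
    rw [sin_sq_eq_half_sub, div_eq_inv_mul (cos _)]
    congr 3
    push_cast
    ring
  rw [sum_congr rfl fun j _ => hterm j, sum_sub_distrib, ← mul_sum,
    sum_cos_two_pi_mul_div_add_eq_zero hL, sum_const, Nat.card_Icc, Nat.add_sub_cancel]
  simp [div_eq_mul_inv]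

lemma two_nsmul_sum_Icc_sum_Icc_succ {M : Type*} [AddCommMonoid M] {a b : ℕ}
    {f : ℕ → ℕ → M} (hsymm : ∀ i j, f i j = f j i) (hdiag : ∀ i, f i i = 0) :
    2 • ∑ i ∈ Icc a b, ∑ j ∈ Icc (i + 1) b, f i j = ∑ i ∈ Icc a b, ∑ j ∈ Icc a b, f i j := by
  have hsplit :
      ∀ i j, f i j = (if i < j then f i j else 0) + (if j < i then f i j else 0) := by
    intro i j
    rcases lt_trichotomy i j with h | rfl | h
    · simp [h, h.not_gt]
    · simp [hdiag]
    · simp [h, h.not_gt]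
  have hupper : ∑ i ∈ Icc a b, ∑ j ∈ Icc (i + 1) b, f i j
      = ∑ i ∈ Icc a b, ∑ j ∈ Icc a b, if i < j then f i j else 0 := by
    refine sum_congr rfl fun i hi => ?_
    rw [← sum_filter]
    congr 1
    ext j
    simp only [mem_Icc, mem_filter] at hi ⊢
    omega
  have hlower : ∑ i ∈ Icc a b, ∑ j ∈ Icc a b, (if j < i then f i j else 0)
      = ∑ i ∈ Icc a b, ∑ j ∈ Icc a b, if i < j then f i j else 0 := by
    rw [sum_comm]
    exact sum_congr rfl fun i _ => sum_congr rfl fun j _ => by rw [hsymm]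
  calc 2 • ∑ i ∈ Icc a b, ∑ j ∈ Icc (i + 1) b, f i j
      = ∑ i ∈ Icc a b, ∑ j ∈ Icc a b,
          ((if i < j then f i j else 0) + (if j < i then f i j else 0)) := by
        simp only [sum_add_distrib, hlower, hupper, two_nsmul]
    _ = ∑ i ∈ Icc a b, ∑ j ∈ Icc a b, f i j := by simp only [← hsplit]

/-- For `L ≥ 3` equally spaced angles `θ_i = 2πi/L`,
`D = Σ_{1≤i<j≤L} sin²(θ_j − θ_i) = L²/4`. -/
theorem stmt12 (L : ℕ) (hL : 3 ≤ L) :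
    ∑ i ∈ Finset.Icc 1 L, ∑ j ∈ Finset.Icc (i + 1) L,
        Real.sin (2 * Real.pi * j / L - 2 * Real.pi * i / L) ^ 2
      = (L : ℝ) ^ 2 / 4 := by
  have hL2 : ¬ L ∣ 2 := fun h => by have := Nat.le_of_dvd two_pos h; omega
  have hfull : ∑ i ∈ Icc 1 L, ∑ j ∈ Icc 1 L, sin (2 * π * j / L - 2 * π * i / L) ^ 2
      = L * (L / 2) := by
    rw [sum_congr rfl fun i _ => sum_sin_sq_two_pi_mul_div_sub hL2 _, sum_const, Nat.card_Icc,
      Nat.add_sub_cancel, nsmul_eq_mul]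
  have hhalf := two_nsmul_sum_Icc_sum_Icc_succ (a := 1) (b := L)
    (f := fun i j : ℕ => sin (2 * π * j / L - 2 * π * i / L) ^ 2)
    (fun i j => by rw [← neg_sub, sin_neg, neg_sq]) (fun i => by simp)
  rw [hfull, two_nsmul] at hhalf
  linarith
end
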